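/- arXiv:1308.1130 — 4 statements merged into one kernel-verified Lean document; each statement's English description precedes it below -/
import Mathlib

section
/- Let T be a bounded operator on a Hilbert space H and M a closed subspace of H that is invariant under the adjoint T*. Suppose the compression P_M T restricted to M is hyponormal, i.e. ‖(P_M T|_M)* g‖ ≤ ‖P_M T g‖ for all g ∈ M. If f ∈ M satisfies ‖T* f‖ = ‖T f‖, then T f ∈ M. -/
theorem compression_hyponormal_isometric_mem_general
    {H : Type*} [NormedAddCommGroup H] [InnerProductSpace ℂ H] [CompleteSpace H]
    (T : H →L[ℂ] H) (M : Submodule ℂ H) [CompleteSpace M]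
    (hhypo : ∀ g ∈ M, ‖ContinuousLinearMap.adjoint T g‖ ≤ ‖(Submodule.orthogonalProjection M (T g) : H)‖)
    (f : H) (hf : f ∈ M) (hnorm : ‖ContinuousLinearMap.adjoint T f‖ = ‖T f‖) :
    T f ∈ M :=
  (M.mem_iff_norm_starProjection (T f)).2 <|
    le_antisymm (M.norm_orthogonalProjectionOnto_apply_le (T f)) (hnorm ▸ hhypo f hf)

/-- If the compression of `T` to a co-invariant closed subspace `M` is hyponormal
(note `(P_M T|_M)* g = T* g` for `g ∈ M` by co-invariance), and `f ∈ M` satisfies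
`‖T* f‖ = ‖T f‖`, then `T f ∈ M`. -/
theorem compression_hyponormal_isometric_mem
    {H : Type*} [NormedAddCommGroup H] [InnerProductSpace ℂ H] [CompleteSpace H]
    (T : H →L[ℂ] H) (M : Submodule ℂ H) [CompleteSpace M]
    (hcoinv : ∀ x ∈ M, ContinuousLinearMap.adjoint T x ∈ M)
    (hhypo : ∀ g ∈ M, ‖ContinuousLinearMap.adjoint T g‖ ≤ ‖(Submodule.orthogonalProjection M (T g) : H)‖)
    (f : H) (hf : f ∈ M) (hnorm : ‖ContinuousLinearMap.adjoint T f‖ = ‖T f‖) :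
    T f ∈ M :=
  compression_hyponormal_isometric_mem_general T M hhypo f hf hnorm
end

section
/- In the Drury–Arveson space H²₂ on the unit ball of ℂ², realized as the symmetric Fock space where the monomial z₁^m z₂^n has squared norm m! n! / (m+n)!, the multiplication operator M_{z₁z₂} satisfies ‖M_{z₁z₂}(z₁z₂)‖² = 1/6 and ‖M_{z₁z₂}*(z₁z₂)‖² = 1/4; in particular M_{z₁z₂} is not hyponormal. -/
/-!
`M` shifts the orthogonal family `e` injectively, so testing against the dense span shows that
`M*` maps `e (1, 1)` to `(‖e (1, 1)‖² / ‖e (0, 0)‖²) • e (0, 0) = (1/2) • e (0, 0)`, of squared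
norm `1/4`, while `‖M (e (1, 1))‖² = ‖e (2, 2)‖² = 2! 2! / 4! = 1/6 < 1/4`.
-/

open scoped InnerProductSpace

theorem eq_of_inner_eq_of_dense_span {𝕜 E ι : Type*} [RCLike 𝕜] [NormedAddCommGroup E]
    [InnerProductSpace 𝕜 E] {e : ι → E}
    (hdense : Dense ((Submodule.span 𝕜 (Set.range e) : Submodule 𝕜 E) : Set E)) {x y : E}
    (h : ∀ i, ⟪e i, x⟫_𝕜 = ⟪e i, y⟫_𝕜) : x = y := by
  have hSL : innerSL 𝕜 x = innerSL 𝕜 y := by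
    refine ContinuousLinearMap.ext_on hdense ?_
    rintro _ ⟨i, rfl⟩
    simp only [innerSL_apply_apply, ← inner_conj_symm x, ← inner_conj_symm y, h i]
  exact ext_inner_right 𝕜 fun v => by simpa using congrArg (· v) hSL

section OrthogonalShift

variable {H : Type*} [NormedAddCommGroup H] [InnerProductSpace ℂ H] [CompleteSpace H]
  {ι : Type*} {e : ι → H}

theorem adjoint_apply_shift_eq_smul
    (horth : Pairwise fun i j => ⟪e i, e j⟫_ℂ = 0)
    (hdense : Dense ((Submodule.span ℂ (Set.range e) : Submodule ℂ H) : Set H))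
    {s : ι → ι} (hs : s.Injective) {M : H →L[ℂ] H} (hM : ∀ i, M (e i) = e (s i))
    {j : ι} (hj : e j ≠ 0) :
    ContinuousLinearMap.adjoint M (e (s j)) =
      ((‖e (s j)‖ ^ 2 / ‖e j‖ ^ 2 : ℝ) : ℂ) • e j := by
  refine eq_of_inner_eq_of_dense_span hdense fun i => ?_
  rw [ContinuousLinearMap.adjoint_inner_right, hM, inner_smul_right]
  rcases eq_or_ne i j with rfl | hij
  · rw [inner_self_eq_norm_sq_to_K, inner_self_eq_norm_sq_to_K,
      RCLike.ofReal_eq_complex_ofReal, ← Complex.ofReal_pow, ← Complex.ofReal_pow,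
      ← Complex.ofReal_mul, div_mul_cancel₀ _ (by simpa using hj)]
  · rw [horth (hs.ne hij), horth hij, mul_zero]

theorem norm_adjoint_apply_shift_sq
    (horth : Pairwise fun i j => ⟪e i, e j⟫_ℂ = 0)
    (hdense : Dense ((Submodule.span ℂ (Set.range e) : Submodule ℂ H) : Set H))
    {s : ι → ι} (hs : s.Injective) {M : H →L[ℂ] H} (hM : ∀ i, M (e i) = e (s i))
    {j : ι} (hj : e j ≠ 0) :
    ‖ContinuousLinearMap.adjoint M (e (s j))‖ ^ 2 = (‖e (s j)‖ ^ 2) ^ 2 / ‖e j‖ ^ 2 := by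
  have : ‖e j‖ ≠ 0 := norm_ne_zero_iff.mpr hj
  rw [adjoint_apply_shift_eq_smul horth hdense hs hM hj, norm_smul, Complex.norm_real,
    Real.norm_of_nonneg (by positivity)]
  field_simp

end OrthogonalShift

/-- In the Drury–Arveson space `H²₂`, realized as the symmetric Fock space where the
monomial `z₁^m z₂^n` (here `e (m, n)`) has squared norm `m! n! / (m+n)!`, the
multiplication operator `M = M_{z₁z₂}` satisfies `‖M (z₁z₂)‖² = 1/6` and
`‖M* (z₁z₂)‖² = 1/4`; in particular `M` is not hyponormal. -/
theorem DruryArveson_multiplication_not_hyponormal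
    {H : Type*} [NormedAddCommGroup H] [InnerProductSpace ℂ H] [CompleteSpace H]
    (e : ℕ × ℕ → H)
    (horth : ∀ α β, α ≠ β → (inner ℂ (e α) (e β) : ℂ) = 0)
    (hnorm : ∀ m n, ‖e (m, n)‖ ^ 2 =
      (Nat.factorial m * Nat.factorial n : ℝ) / (Nat.factorial (m + n) : ℝ))
    (hdense : Dense ((Submodule.span ℂ (Set.range e) : Submodule ℂ H) : Set H))
    (M : H →L[ℂ] H) (hM : ∀ m n, M (e (m, n)) = e (m + 1, n + 1)) :
    ‖M (e (1, 1))‖ ^ 2 = 1 / 6 ∧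
    ‖ContinuousLinearMap.adjoint M (e (1, 1))‖ ^ 2 = 1 / 4 ∧
    ¬ (∀ x, ‖ContinuousLinearMap.adjoint M x‖ ≤ ‖M x‖) := by
  have hshift_inj : Function.Injective fun α : ℕ × ℕ => (α.1 + 1, α.2 + 1) := by
    rintro ⟨a, b⟩ ⟨c, d⟩ h
    simp_all
  have he₀ : e (0, 0) ≠ 0 := by
    rw [← norm_ne_zero_iff, ← pow_ne_zero_iff two_ne_zero, hnorm]
    norm_num
  have hM_norm : ‖M (e (1, 1))‖ ^ 2 = 1 / 6 := by
    rw [hM, hnorm]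
    norm_num [Nat.factorial]
  have hadj_norm : ‖ContinuousLinearMap.adjoint M (e (1, 1))‖ ^ 2 = 1 / 4 := by
    rw [norm_adjoint_apply_shift_sq (s := fun α => (α.1 + 1, α.2 + 1)) horth hdense hshift_inj
      (fun α => hM α.1 α.2) he₀, hnorm, hnorm]
    norm_num [Nat.factorial]
  refine ⟨hM_norm, hadj_norm, fun hyponormal => ?_⟩
  have := pow_le_pow_left₀ (norm_nonneg _) (hyponormal (e (1, 1))) 2
  rw [hM_norm, hadj_norm] at this
  norm_num at this
end

section
/- Let F ⊆ H²_d be a closed subspace co-invariant under all multiplication operators such that for every w ∈ B_d the compression of M_{⟨·,w⟩} to F is hyponormal. If the constant function 1 lies in F and k_d(·, z) ∈ F for some z ∈ B_d, then the linear function ⟨·, z⟩ lies in F. -/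
/-!
Write `k_w(x) = (1 - ⟪w, x⟫)⁻¹` and `φ(x) = ⟪z, x⟫`. The multiplier `M = M_φ` is bounded with
`‖M‖ ≤ ‖z‖`, because the kernel `(‖z‖² - φ(x) conj φ(y)) k_y(x)` equals
`‖z‖² + (‖z‖² ⟪y, x⟫ - ⟪y, z⟫⟪z, x⟫) k_y(x)`: a constant plus the Schur product of two positive
kernels. For `f = k_z - 1` one finds `M f = f - φ` and `M* f = ‖z‖² k_z`, and
`‖f - φ‖² = ‖z‖²/(1 - ‖z‖²) - 2‖z‖² + ‖φ‖²` with `‖φ‖ = ‖M 1‖ ≤ ‖z‖` gives `‖M f‖ ≤ ‖M* f‖`.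
Hyponormality of the compression then gives `‖M f‖ ≤ ‖P_F M f‖`, so `M f ∈ F` and
`φ = f - M f ∈ F`.
-/

/-- A reproducing kernel Hilbert space of `ℂ`-valued functions on `X`. -/
structure RKHSpace (X : Type*) (H : Type*) [NormedAddCommGroup H] [InnerProductSpace ℂ H] where
  toFun : H →ₗ[ℂ] (X → ℂ)
  injective : Function.Injective toFun
  kernelVec : X → H
  reproducing : ∀ (f : H) (x : X), toFun f x = (inner ℂ (kernelVec x) f : ℂ)

open scoped ComplexOrder ComplexConjugate InnerProductSpace
open Matrix

namespace Matrix

variable {n 𝕜 E : Type*} [RCLike 𝕜] [NormedAddCommGroup E] [InnerProductSpace 𝕜 E]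

theorem sum_star_mul_gram_mul_eq_inner (v : n → E) (x : n →₀ 𝕜) :
    (x.sum fun i xi ↦ x.sum fun j xj ↦ star xi * gram 𝕜 v i j * xj) =
      ⟪Finsupp.linearCombination 𝕜 v x, Finsupp.linearCombination 𝕜 v x⟫_𝕜 := by
  simp only [Finsupp.linearCombination_apply, Finsupp.sum, sum_inner, inner_sum, inner_smul_left,
    inner_smul_right, gram_apply, RCLike.star_def, Finset.mul_sum]
  rw [Finset.sum_comm]
  exact Finset.sum_congr rfl fun _ _ ↦ Finset.sum_congr rfl fun _ _ ↦ by ring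

/-- Unlike `Matrix.posSemidef_gram`, no finiteness of the index type is assumed. -/
theorem posSemidef_gram' (v : n → E) : (gram 𝕜 v).PosSemidef := by
  refine ⟨isHermitian_gram 𝕜 v, fun x ↦ ?_⟩
  rw [sum_star_mul_gram_mul_eq_inner, inner_self_eq_norm_sq_to_K]
  norm_cast
  positivity

theorem PosSemidef.norm_linearCombination_le {F : Type*} [NormedAddCommGroup F]
    [InnerProductSpace 𝕜 F] {u : n → E} {w : n → F} {C : ℝ} (hC : 0 ≤ C)
    (h : (C ^ 2 • gram 𝕜 u - gram 𝕜 w).PosSemidef) (x : n →₀ 𝕜) :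
    ‖Finsupp.linearCombination 𝕜 w x‖ ≤ C * ‖Finsupp.linearCombination 𝕜 u x‖ := by
  have hform : (x.sum fun i xi ↦ x.sum fun j xj ↦
      star xi * (C ^ 2 • gram 𝕜 u - gram 𝕜 w) i j * xj) =
      (C ^ 2 : 𝕜) * ⟪Finsupp.linearCombination 𝕜 u x, Finsupp.linearCombination 𝕜 u x⟫_𝕜
        - ⟪Finsupp.linearCombination 𝕜 w x, Finsupp.linearCombination 𝕜 w x⟫_𝕜 := by
    rw [← sum_star_mul_gram_mul_eq_inner, ← sum_star_mul_gram_mul_eq_inner]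
    simp only [Finsupp.sum, sub_apply, smul_apply, RCLike.real_smul_eq_coe_mul, Finset.mul_sum,
      ← Finset.sum_sub_distrib]
    push_cast
    exact Finset.sum_congr rfl fun _ _ ↦ Finset.sum_congr rfl fun _ _ ↦ by ring
  have hnonneg := h.2 x
  rw [hform, inner_self_eq_norm_sq_to_K, inner_self_eq_norm_sq_to_K, sub_nonneg] at hnonneg
  norm_cast at hnonneg
  rw [← mul_pow] at hnonneg
  exact le_of_sq_le_sq hnonneg (by positivity)

end Matrix

theorem Submodule.mem_of_norm_le_norm_orthogonalProjectionOnto {𝕜 E : Type*} [RCLike 𝕜]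
    [NormedAddCommGroup E] [InnerProductSpace 𝕜 E] {K : Submodule 𝕜 E}
    [K.HasOrthogonalProjection] {v : E} (h : ‖v‖ ≤ ‖(K.orthogonalProjectionOnto v : E)‖) :
    v ∈ K :=
  (K.mem_iff_norm_starProjection v).2 ((K.norm_starProjection_apply_le v).antisymm h)

theorem inner_ne_one_of_norm_lt_one {E : Type*} [NormedAddCommGroup E] [InnerProductSpace ℂ E]
    {x y : E} (hx : ‖x‖ < 1) (hy : ‖y‖ < 1) : ⟪x, y⟫_ℂ ≠ 1 := fun h ↦ by
  have := norm_inner_le_norm (𝕜 := ℂ) x y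
  rw [h, norm_one] at this
  nlinarith [norm_nonneg x, norm_nonneg y]

namespace RKHSpace

variable {X H : Type*} [NormedAddCommGroup H] [InnerProductSpace ℂ H] [CompleteSpace H]
  (R : RKHSpace X H)

theorem denseRange_linearCombination_kernelVec :
    DenseRange (Finsupp.linearCombination ℂ R.kernelVec) := by
  rw [DenseRange, ← LinearMap.coe_range, Submodule.dense_iff_topologicalClosure_eq_top,
    Submodule.topologicalClosure_eq_top_iff, Submodule.eq_bot_iff]
  intro f hf
  refine R.injective (funext fun x ↦ ?_)
  rw [map_zero, R.reproducing]
  exact hf _ ⟨Finsupp.single x 1, by simp⟩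

theorem exists_multiplier (φ : X → ℂ) {C : ℝ} (hC : 0 ≤ C)
    (h : (C ^ 2 • gram ℂ R.kernelVec - gram ℂ fun x ↦ conj (φ x) • R.kernelVec x).PosSemidef) :
    ∃ T : H →L[ℂ] H, (∀ f x, R.toFun (T f) x = φ x * R.toFun f x) ∧
      (∀ x, T.adjoint (R.kernelVec x) = conj (φ x) • R.kernelVec x) ∧ ‖T‖ ≤ C := by
  set S := (Finsupp.linearCombination ℂ fun x ↦ conj (φ x) • R.kernelVec x).extendOfNorm
    (Finsupp.linearCombination ℂ R.kernelVec)
  have hbound := h.norm_linearCombination_le hC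
  have hS : ∀ x, S (R.kernelVec x) = conj (φ x) • R.kernelVec x := fun x ↦ by
    simpa using LinearMap.extendOfNorm_eq R.denseRange_linearCombination_kernelVec
      ⟨C, hbound⟩ (Finsupp.single x 1)
  refine ⟨S.adjoint, fun f x ↦ ?_, by simpa using hS, ?_⟩
  · rw [R.reproducing, R.reproducing, ContinuousLinearMap.adjoint_inner_right, hS,
      inner_smul_left, Complex.conj_conj]
  · rw [LinearIsometryEquiv.norm_map]
    exact LinearMap.opNorm_extendOfNorm_le R.denseRange_linearCombination_kernelVec hC hbound

end RKHSpace

section DruryArveson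

variable {E H : Type*} [NormedAddCommGroup E] [InnerProductSpace ℂ E]
  [NormedAddCommGroup H] [InnerProductSpace ℂ H] (R : RKHSpace {z : E // ‖z‖ < 1} H)

theorem inner_kernelVec_kernelVec
    (hker : ∀ z w : {z : E // ‖z‖ < 1},
      R.toFun (R.kernelVec w) z = (1 - (inner ℂ (w : E) (z : E) : ℂ))⁻¹)
    (x y : {z : E // ‖z‖ < 1}) :
    ⟪R.kernelVec x, R.kernelVec y⟫_ℂ = (1 - ⟪(y : E), (x : E)⟫_ℂ)⁻¹ := by
  rw [← R.reproducing, hker]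

theorem posSemidef_multiplier_kernel
    (hker : ∀ z w : {z : E // ‖z‖ < 1},
      R.toFun (R.kernelVec w) z = (1 - (inner ℂ (w : E) (z : E) : ℂ))⁻¹) (z : E) :
    (‖z‖ ^ 2 • gram ℂ R.kernelVec -
      gram ℂ fun x : {z : E // ‖z‖ < 1} ↦ conj ⟪z, (x : E)⟫_ℂ • R.kernelVec x).PosSemidef := by
  have hdecomp : ‖z‖ ^ 2 • gram ℂ R.kernelVec -
      gram ℂ (fun x : {z : E // ‖z‖ < 1} ↦ conj ⟪z, (x : E)⟫_ℂ • R.kernelVec x) =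
      ‖z‖ ^ 2 • gram ℂ (fun _ : {z : E // ‖z‖ < 1} ↦ (1 : ℂ)) +
        (‖innerSL ℂ z‖ ^ 2 • gram ℂ (Subtype.val : {z : E // ‖z‖ < 1} → E) -
          gram ℂ (innerSL ℂ z ∘ Subtype.val))ᵀ ⊙ gram ℂ R.kernelVec := by
    ext x y
    have hne : 1 - ⟪(y : E), (x : E)⟫_ℂ ≠ 0 :=
      sub_ne_zero.2 (inner_ne_one_of_norm_lt_one y.2 x.2).symm
    simp only [Matrix.sub_apply, Matrix.add_apply, Matrix.smul_apply, hadamard_apply,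
      transpose_apply, gram_apply, inner_smul_left, inner_smul_right, innerSL_apply_norm,
      innerSL_apply_apply, Function.comp_apply, inner_kernelVec_kernelVec R hker, Complex.conj_conj,
      RCLike.real_smul_eq_coe_mul, RCLike.inner_apply, map_one]
    field_simp
    ring
  rw [hdecomp]
  exact ((posSemidef_gram' _).smul (sq_nonneg _)).add
    ((posSemidef_opNorm_smul_gram_sub_gram _ _).transpose.hadamard (posSemidef_gram' _))

theorem norm_kernelVec_sub_kernelVec_zero_sub_le
    (hker : ∀ z w : {z : E // ‖z‖ < 1},
      R.toFun (R.kernelVec w) z = (1 - (inner ℂ (w : E) (z : E) : ℂ))⁻¹)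
    (z : {z : E // ‖z‖ < 1}) (g : H)
    (hg : ∀ x : {z : E // ‖z‖ < 1}, R.toFun g x = ⟪(z : E), (x : E)⟫_ℂ) (hgz : ‖g‖ ≤ ‖(z : E)‖) :
    ‖R.kernelVec z - R.kernelVec ⟨0, by simp⟩ - g‖ ≤ ‖(z : E)‖ ^ 2 * ‖R.kernelVec z‖ := by
  set t := ‖(z : E)‖ ^ 2
  have ht : t < 1 := by nlinarith [z.2, norm_nonneg (z : E)]
  have hzz : ⟪(z : E), (z : E)⟫_ℂ = t := by
    rw [inner_self_eq_norm_sq_to_K]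
    norm_cast
  have hkg : ∀ x, ⟪R.kernelVec x, g⟫_ℂ = ⟪(z : E), (x : E)⟫_ℂ := fun x ↦ by
    rw [← R.reproducing, hg]
  have hgk : ∀ x, ⟪g, R.kernelVec x⟫_ℂ = ⟪(x : E), (z : E)⟫_ℂ := fun x ↦ by
    rw [← inner_conj_symm, hkg, inner_conj_symm]
  have hlhs : ‖R.kernelVec z - R.kernelVec ⟨0, by simp⟩ - g‖ ^ 2 =
      (1 - t)⁻¹ - 1 - 2 * t + ‖g‖ ^ 2 := by
    rw [@norm_sq_eq_re_inner ℂ]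
    simp only [inner_sub_left, inner_sub_right, inner_kernelVec_kernelVec R hker, hkg, hgk, hzz,
      inner_self_eq_norm_sq_to_K g, inner_zero_left, inner_zero_right]
    convert RCLike.ofReal_re (K := ℂ) ((1 - t)⁻¹ - 1 - 2 * t + ‖g‖ ^ 2) using 2
    push_cast
    simp only [Complex.coe_algebraMap]
    ring
  have hrhs : ‖R.kernelVec z‖ ^ 2 = (1 - t)⁻¹ := by
    rw [@norm_sq_eq_re_inner ℂ, inner_kernelVec_kernelVec R hker, hzz]
    convert RCLike.ofReal_re (K := ℂ) (1 - t)⁻¹ using 2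
    push_cast
    rfl
  have hg2 : ‖g‖ ^ 2 ≤ t := pow_le_pow_left₀ (norm_nonneg g) hgz 2
  have hgeom : t ^ 2 * (1 - t)⁻¹ = (1 - t)⁻¹ - 1 - t := by
    field_simp [(sub_pos.2 ht).ne']
    ring
  refine le_of_sq_le_sq ?_ (by positivity)
  rw [mul_pow, hlhs, hrhs, hgeom]
  linarith

end DruryArveson

theorem linear_function_mem_of_kernel_mem_general
    {E H : Type*} [NormedAddCommGroup E] [InnerProductSpace ℂ E]
    [NormedAddCommGroup H] [InnerProductSpace ℂ H] [CompleteSpace H]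
    (R : RKHSpace {z : E // ‖z‖ < 1} H)
    (hker : ∀ z w : {z : E // ‖z‖ < 1},
      R.toFun (R.kernelVec w) z = (1 - (inner ℂ (w : E) (z : E) : ℂ))⁻¹)
    (F : Submodule ℂ H) [CompleteSpace F]
    (hhypo : ∀ (w : {z : E // ‖z‖ < 1}) (T : H →L[ℂ] H),
      (∀ (f : H) (x : {z : E // ‖z‖ < 1}),
        R.toFun (T f) x = (inner ℂ (w : E) (x : E) : ℂ) * R.toFun f x) →
      ∀ f ∈ F, ‖ContinuousLinearMap.adjoint T f‖ ≤ ‖(F.orthogonalProjection (T f) : H)‖)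
    (one : H) (hone : ∀ x, R.toFun one x = 1) (honeF : one ∈ F)
    (z : {z : E // ‖z‖ < 1}) (hz : R.kernelVec z ∈ F)
    (g : H) (hg : ∀ x : {z : E // ‖z‖ < 1}, R.toFun g x = (inner ℂ (z : E) (x : E) : ℂ)) :
    g ∈ F := by
  obtain ⟨T, hTmul, hTadj, hTnorm⟩ :=
    R.exists_multiplier _ (norm_nonneg _) (posSemidef_multiplier_kernel R hker z)
  have hone_eq : one = R.kernelVec ⟨0, by simp⟩ :=
    R.injective <| funext fun x ↦ by simp [hone, hker]
  have hf : R.kernelVec z - one ∈ F := F.sub_mem hz honeF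
  have hTf : T (R.kernelVec z - one) = R.kernelVec z - one - g :=
    R.injective <| funext fun x ↦ by
      have hne := sub_ne_zero.2 (inner_ne_one_of_norm_lt_one z.2 x.2).symm
      simp only [hTmul, map_sub, Pi.sub_apply, hker, hone, hg]
      field_simp
      ring
  have hTadj_f : T.adjoint (R.kernelVec z - one) = (‖(z : E)‖ ^ 2 : ℂ) • R.kernelVec z := by
    rw [map_sub, hone_eq, hTadj, hTadj]
    simp [inner_self_eq_norm_sq_to_K]
  have hgz : ‖g‖ ≤ ‖(z : E)‖ := by
    have hTone : T one = g := R.injective <| funext fun x ↦ by rw [hTmul, hone, hg, mul_one]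
    have hone_norm : ‖one‖ = 1 := by
      rw [@norm_eq_sqrt_re_inner ℂ]
      nth_rewrite 1 [hone_eq]
      simp [← R.reproducing, hone]
    simpa [hTone, hone_norm] using T.le_of_opNorm_le hTnorm one
  have hnorm : ‖T (R.kernelVec z - one)‖ ≤ ‖T.adjoint (R.kernelVec z - one)‖ := by
    rw [hTf, hTadj_f, norm_smul, hone_eq]
    simpa using norm_kernelVec_sub_kernelVec_zero_sub_le R hker z g hg hgz
  have hTfF := Submodule.mem_of_norm_le_norm_orthogonalProjectionOnto
    (hnorm.trans (hhypo z T hTmul _ hf))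
  rw [hTf] at hTfF
  simpa using F.sub_mem hf hTfF

/-- Let `F ⊆ H²_d` be closed and co-invariant under all multiplication operators, such
that for every `w ∈ B_d` the compression of `M_{⟨·,w⟩}` to `F` is hyponormal.  If the
constant function `1` lies in `F` and `k_d(·,z) ∈ F` for some `z ∈ B_d`, then the
function `⟨·,z⟩` lies in `F`. -/
theorem linear_function_mem_of_kernel_mem
    {E H : Type*} [NormedAddCommGroup E] [InnerProductSpace ℂ E] [CompleteSpace E]
    [NormedAddCommGroup H] [InnerProductSpace ℂ H] [CompleteSpace H]
    (R : RKHSpace {z : E // ‖z‖ < 1} H)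
    (hker : ∀ z w : {z : E // ‖z‖ < 1},
      R.toFun (R.kernelVec w) z = (1 - (inner ℂ (w : E) (z : E) : ℂ))⁻¹)
    (F : Submodule ℂ H) [CompleteSpace F]
    (hcoinv : ∀ T : H →L[ℂ] H,
      (∃ φ : {z : E // ‖z‖ < 1} → ℂ, ∀ (f : H) (x : {z : E // ‖z‖ < 1}),
        R.toFun (T f) x = φ x * R.toFun f x) →
      ∀ f ∈ F, ContinuousLinearMap.adjoint T f ∈ F)
    (hhypo : ∀ (w : {z : E // ‖z‖ < 1}) (T : H →L[ℂ] H),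
      (∀ (f : H) (x : {z : E // ‖z‖ < 1}),
        R.toFun (T f) x = (inner ℂ (w : E) (x : E) : ℂ) * R.toFun f x) →
      ∀ f ∈ F, ‖ContinuousLinearMap.adjoint T f‖ ≤ ‖(F.orthogonalProjection (T f) : H)‖)
    (one : H) (hone : ∀ x, R.toFun one x = 1) (honeF : one ∈ F)
    (z : {z : E // ‖z‖ < 1}) (hz : R.kernelVec z ∈ F)
    (g : H) (hg : ∀ x : {z : E // ‖z‖ < 1}, R.toFun g x = (inner ℂ (z : E) (x : E) : ℂ)) :
    g ∈ F :=
  linear_function_mem_of_kernel_mem_general R hker F hhypo one hone honeF z hz g hg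
end

section
/- Let H be a RKHS on X with kernel K, let b : X → B_d satisfy K(λ,μ) = (1 − ⟨b(λ), b(μ)⟩)⁻¹ for all λ, μ, and suppose the composition map f ↦ (f|_{b(X)}) ∘ b is a unitary from H²_d ⊖ I(b(X)) onto H. Then for any multiplier φ of H²_d, the function (φ|_{b(X)}) ∘ b is a multiplier of H, and under the unitary U the operator M_{(φ|_{b(X)}) ∘ b} corresponds to the compression P_F M_φ|_F, where F = H²_d ⊖ I(b(X)); i.e. U* M_{(φ|_Y) ∘ b} U = P_F M_φ|_F. -/
/-!
The kernel functions `k_y`, `y ∈ Y`, are orthogonal to `I(Y)`, so they lie in `F = I(Y)ᗮ`; hence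
projecting onto `F` does not change values on `Y`. Consequently the compression `P_F M_φ|_F`
multiplies by `φ` on `Y`, and transporting it along `U` gives a multiplication operator on `H`.
-/

set_option synthInstance.maxHeartbeats 1000000

/-- A reproducing kernel Hilbert space of `ℂ`-valued functions on `X`. -/
structure RKHS' (X : Type*) (H : Type*) [NormedAddCommGroup H] [InnerProductSpace ℂ H] where
  toFun : H →ₗ[ℂ] (X → ℂ)
  injective : Function.Injective toFun
  kernelVec : X → H
  reproducing : ∀ (f : H) (x : X), toFun f x = (inner ℂ (kernelVec x) f : ℂ)

/-- `I(Y)`: the subspace of functions in the RKHS vanishing on `Y`. -/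
noncomputable def RKHS'.zeroSet {X H : Type*} [NormedAddCommGroup H] [InnerProductSpace ℂ H]
    (R : RKHS' X H) (Y : Set X) : Submodule ℂ H :=
  ⨅ y ∈ Y, LinearMap.ker ((LinearMap.proj y).comp R.toFun)

noncomputable def Submodule.compression {𝕜 E : Type*} [RCLike 𝕜] [NormedAddCommGroup E]
    [InnerProductSpace 𝕜 E] (K : Submodule 𝕜 E) [K.HasOrthogonalProjection] (T : E →L[𝕜] E) :
    K →L[𝕜] K :=
  K.orthogonalProjectionOnto ∘L T ∘L K.subtypeL

namespace RKHS'

variable {X H : Type*} [NormedAddCommGroup H] [InnerProductSpace ℂ H] (R : RKHS' X H)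

theorem toFun_eq_zero_of_mem_zeroSet {Y : Set X} {f : H} (hf : f ∈ R.zeroSet Y) {y : X}
    (hy : y ∈ Y) : R.toFun f y = 0 := by
  simpa using (Submodule.mem_iInf _).1 ((Submodule.mem_iInf _).1 hf y) hy

theorem kernelVec_mem_orthogonal_zeroSet {Y : Set X} {y : X} (hy : y ∈ Y) :
    R.kernelVec y ∈ (R.zeroSet Y)ᗮ := by
  refine (Submodule.mem_orthogonal' _ _).2 fun f hf => ?_
  rw [← R.reproducing, R.toFun_eq_zero_of_mem_zeroSet hf hy]

theorem toFun_orthogonalProjectionOnto_of_kernelVec_mem {K : Submodule ℂ H}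
    [K.HasOrthogonalProjection] {y : X} (hy : R.kernelVec y ∈ K) (f : H) :
    R.toFun (K.orthogonalProjectionOnto f) y = R.toFun f y := by
  rw [R.reproducing, R.reproducing]
  exact Submodule.inner_orthogonalProjectionOnto_eq_of_mem_left ⟨_, hy⟩ f

theorem toFun_compression_apply {Y : Set X} [(R.zeroSet Y)ᗮ.HasOrthogonalProjection]
    {φ : X → ℂ} {T : H →L[ℂ] H} (hT : ∀ f y, R.toFun (T f) y = φ y * R.toFun f y)
    (f : (R.zeroSet Y)ᗮ) {y : X} (hy : y ∈ Y) :
    R.toFun ((R.zeroSet Y)ᗮ.compression T f) y = φ y * R.toFun f y := by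
  rw [Submodule.compression, ContinuousLinearMap.comp_apply, ContinuousLinearMap.comp_apply,
    R.toFun_orthogonalProjectionOnto_of_kernelVec_mem (R.kernelVec_mem_orthogonal_zeroSet hy), hT,
    Submodule.subtypeL_apply]

end RKHS'

theorem multiplier_compression_correspondence_general
    {X E H H2 : Type*}
    [NormedAddCommGroup E] [InnerProductSpace ℂ E]
    [NormedAddCommGroup H] [InnerProductSpace ℂ H]
    [NormedAddCommGroup H2] [InnerProductSpace ℂ H2]
    (R : RKHS' X H) (b : X → {z : E // ‖z‖ < 1})
    (D : RKHS' {z : E // ‖z‖ < 1} H2)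
    [CompleteSpace ((D.zeroSet (Set.range b))ᗮ : Submodule ℂ H2)]
    (U : ((D.zeroSet (Set.range b))ᗮ : Submodule ℂ H2) ≃ₗᵢ[ℂ] H)
    (hU : ∀ (f : (D.zeroSet (Set.range b))ᗮ) (l : X),
      R.toFun (U f) l = D.toFun (f : H2) (b l))
    (φ : {z : E // ‖z‖ < 1} → ℂ) (T : H2 →L[ℂ] H2)
    (hT : ∀ (f : H2) (z : {z : E // ‖z‖ < 1}), D.toFun (T f) z = φ z * D.toFun f z) :
    ∃ S : H →L[ℂ] H,
      (∀ (f : H) (l : X), R.toFun (S f) l = φ (b l) * R.toFun f l) ∧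
      ∀ f : (D.zeroSet (Set.range b))ᗮ,
        U.symm (S (U f)) = Submodule.orthogonalProjectionOnto (D.zeroSet (Set.range b))ᗮ (T (f : H2)) := by
  refine ⟨U.toContinuousLinearEquiv.conjContinuousAlgEquiv
    ((D.zeroSet (Set.range b))ᗮ.compression T), fun f l => ?_, fun f => ?_⟩
  · obtain ⟨g, rfl⟩ := U.surjective f
    simpa [hU] using D.toFun_compression_apply hT g ⟨l, rfl⟩
  · simp [Submodule.compression]

/-- Suppose the RKHS `H` on `X` has kernel `K(λ,μ) = (1 - ⟨b(λ),b(μ)⟩)⁻¹` via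
`b : X → B_d`, and `U : f ↦ (f|_{b(X)}) ∘ b` is a unitary from `F = H²_d ⊖ I(b(X))`
onto `H`.  Then for any multiplier `φ` of `H²_d`, the function `(φ|_{b(X)}) ∘ b` is a
multiplier of `H`, and `U* M_{(φ|_{b(X)}) ∘ b} U = P_F M_φ |_F`. -/
theorem multiplier_compression_correspondence
    {X E H H2 : Type*}
    [NormedAddCommGroup E] [InnerProductSpace ℂ E] [CompleteSpace E]
    [NormedAddCommGroup H] [InnerProductSpace ℂ H] [CompleteSpace H]
    [NormedAddCommGroup H2] [InnerProductSpace ℂ H2] [CompleteSpace H2]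
    (R : RKHS' X H) (b : X → {z : E // ‖z‖ < 1})
    (hbker : ∀ l m : X,
      R.toFun (R.kernelVec m) l = (1 - (inner ℂ ((b m) : E) ((b l) : E) : ℂ))⁻¹)
    (D : RKHS' {z : E // ‖z‖ < 1} H2)
    (hDker : ∀ z w : {z : E // ‖z‖ < 1},
      D.toFun (D.kernelVec w) z = (1 - (inner ℂ (w : E) (z : E) : ℂ))⁻¹)
    [CompleteSpace ((D.zeroSet (Set.range b))ᗮ : Submodule ℂ H2)]
    (U : ((D.zeroSet (Set.range b))ᗮ : Submodule ℂ H2) ≃ₗᵢ[ℂ] H)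
    (hU : ∀ (f : (D.zeroSet (Set.range b))ᗮ) (l : X),
      R.toFun (U f) l = D.toFun (f : H2) (b l))
    (φ : {z : E // ‖z‖ < 1} → ℂ) (T : H2 →L[ℂ] H2)
    (hT : ∀ (f : H2) (z : {z : E // ‖z‖ < 1}), D.toFun (T f) z = φ z * D.toFun f z) :
    ∃ S : H →L[ℂ] H,
      (∀ (f : H) (l : X), R.toFun (S f) l = φ (b l) * R.toFun f l) ∧
      ∀ f : (D.zeroSet (Set.range b))ᗮ,
        U.symm (S (U f)) = Submodule.orthogonalProjectionOnto (D.zeroSet (Set.range b))ᗮ (T (f : H2)) :=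
  multiplier_compression_correspondence_general R b D U hU φ T hT
end
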